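/- For n ≥ 5, in the convex polytope graph S''_n, for every index i, no vertex w is equidistant from a_i and b_i, and no vertex w is equidistant from c_i and d_i. -/

import Mathlib

/-- `S` is a distance-equalizer set of `G`. -/
def IsDistEqSet {V : Type*} (G : SimpleGraph V) (S : Set V) : Prop :=
  ∀ u v : V, u ∉ S → v ∉ S → u ≠ v → ∃ x ∈ S, G.dist u x = G.dist v x

/-- The equidistant dimension of `G`. -/
noncomputable def eqdim {V : Type*} (G : SimpleGraph V) : ℕ :=
  sInf {k | ∃ S : Finset V, IsDistEqSet G ↑S ∧ S.card = k}

/-- The convex polytope graph `S''_n` on vertex layers a=0, b=1, c=2, d=3. -/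
def S2Graph (n : ℕ) : SimpleGraph (Fin 4 × ZMod n) :=
  SimpleGraph.fromRel (fun x y =>
    (x.1 = y.1 ∧ y.2 = x.2 + 1) ∨
    (x.1 = 0 ∧ y.1 = 1 ∧ y.2 = x.2) ∨
    (x.1 = 1 ∧ y.1 = 2 ∧ y.2 = x.2) ∨
    (x.1 = 2 ∧ y.1 = 3 ∧ y.2 = x.2) ∨
    (x.1 = 1 ∧ y.1 = 2 ∧ x.2 = y.2 + 1))

/-!
Suppose `d(a_i, w) ≤ d(b_i, w)`. The first step of a geodesic from `a_i` to `w` cannot go to `b_i`,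
so it goes to some `a_{i±1}`; as `b_{i±1}` is adjacent to `b_i`, the inequality persists there.
Hence `w = a_l` lies on the outer cycle. But `d(a_i, a_l)` is at most the cyclic distance
`|l - i|`, while `d(b_i, a_l) ≥ |l - i| + 1`, as witnessed by the 1-Lipschitz function
"cyclic distance to `l`, plus one off the `a`-cycle". The reflection `a ↔ d`, `b ↔ c`, `i ↦ -i`
is an automorphism of `S''_n`, so the same holds for `c_i` and `d_i`.
-/

namespace SimpleGraph

variable {V W : Type*} {G : SimpleGraph V} {G' : SimpleGraph W} {u v w : V}

theorem Adj.dist_le_dist_add_one (h : G.Adj v w) (u : V) : G.dist v u ≤ G.dist w u + 1 := by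
  rw [dist_comm, dist_comm (u := w)]
  rcases h.symm.diff_dist_adj (u := u) with h | h | h <;> omega

theorem Reachable.le_add_dist {f : V → ℕ} (hf : ∀ ⦃x y⦄, G.Adj x y → f y ≤ f x + 1)
    (h : G.Reachable u v) : f v ≤ f u + G.dist u v := by
  obtain ⟨p, hp⟩ := h.exists_walk_length_eq_dist
  rw [← hp]
  clear hp h
  induction p with
  | nil => simp
  | cons hadj _ ih => have := hf hadj; rw [Walk.length_cons]; omega

theorem Reachable.mem_of_dist_le_dist {A : Set V} {σ : V → V}
    (hnbr : ∀ a ∈ A, ∀ x, G.Adj a x → x ∈ A ∨ x = σ a)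
    (hσ : ∀ a ∈ A, ∀ b ∈ A, G.Adj a b → G.Adj (σ a) (σ b))
    {a : V} (ha : a ∈ A) (hr : G.Reachable a w) (h : G.dist a w ≤ G.dist (σ a) w) : w ∈ A := by
  induction hk : G.dist a w using Nat.strong_induction_on generalizing a with
  | _ k ih =>
    obtain ⟨p, hp⟩ := hr.exists_walk_length_eq_dist
    cases p with
    | nil => exact ha
    | @cons _ x _ hax q =>
      rw [Walk.length_cons] at hp
      have hx : G.dist x w + 1 = k := by
        have := dist_le q
        have := hax.dist_le_dist_add_one w
        omega
      rcases hnbr a ha x hax with hxA | rfl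
      · have := (hσ a ha x hxA hax).dist_le_dist_add_one w
        exact ih _ (by omega) hxA q.reachable (by omega) rfl
      · omega

theorem Hom.edist_le (f : G →g G') (u v : V) : G'.edist (f u) (f v) ≤ G.edist u v := by
  by_cases hr : G.Reachable u v
  · obtain ⟨p, hp⟩ := hr.exists_walk_length_eq_edist
    rw [← hp, ← p.length_map f]
    exact SimpleGraph.edist_le _
  · simp [edist_eq_top_of_not_reachable hr]

theorem Iso.dist_eq (φ : G ≃g G') (u v : V) : G'.dist (φ u) (φ v) = G.dist u v := by
  have h : G'.edist (φ u) (φ v) = G.edist u v :=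
    le_antisymm (φ.toHom.edist_le u v) (by simpa using φ.symm.toHom.edist_le (φ u) (φ v))
  rw [dist, dist, h]

end SimpleGraph

namespace ZMod

variable {n : ℕ}

theorem natAbs_valMinAbs_intCast_le (m : ℤ) : (m : ZMod n).valMinAbs.natAbs ≤ m.natAbs := by
  rcases eq_zero_or_neZero n with rfl | _
  · exact le_of_eq (congrArg Int.natAbs (Int.cast_id))
  · exact natAbs_min_of_le_div_two n _ _ (coe_valMinAbs _) (natAbs_valMinAbs_le _)

theorem natAbs_valMinAbs_add_intCast_le (a : ZMod n) (m : ℤ) :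
    (a + m).valMinAbs.natAbs ≤ a.valMinAbs.natAbs + m.natAbs :=
  (natAbs_valMinAbs_add_le a m).trans <|
    (Int.natAbs_add_le _ _).trans (by gcongr; exact natAbs_valMinAbs_intCast_le m)

end ZMod

namespace S2Graph

open SimpleGraph

variable {n : ℕ}

theorem adj_same_layer_iff {t : Fin 4} {j k : ZMod n} :
    (S2Graph n).Adj (t, j) (t, k) ↔ j ≠ k ∧ (k = j + 1 ∨ j = k + 1) := by
  fin_cases t <;> simp [S2Graph, fromRel_adj]

theorem fst_eq_zero_or_eq_of_adj {j : ZMod n} {x : Fin 4 × ZMod n}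
    (h : (S2Graph n).Adj (0, j) x) : x.1 = 0 ∨ x = (1, j) := by
  obtain ⟨t, k⟩ := x
  fin_cases t <;> simp_all [S2Graph, fromRel_adj]

theorem snd_eq_or_succ_of_adj {x y : Fin 4 × ZMod n} (h : (S2Graph n).Adj x y) :
    x.2 = y.2 ∨ (y.2 = x.2 + 1 ∨ x.2 = y.2 + 1) ∧ (x.1 = 0 ↔ y.1 = 0) := by
  obtain ⟨s, j⟩ := x
  obtain ⟨t, k⟩ := y
  fin_cases s <;> fin_cases t <;> simp [S2Graph, fromRel_adj] at h ⊢ <;> tauto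

theorem edist_succ_le_one (t : Fin 4) (j : ZMod n) :
    (S2Graph n).edist (t, j) (t, j + 1) ≤ 1 := by
  rw [edist_le_one_iff_adj_or_eq]
  by_cases h : j = j + 1
  · exact Or.inr (by rw [← h])
  · exact Or.inl (adj_same_layer_iff.2 ⟨h, Or.inl rfl⟩)

theorem edist_add_natCast_le (t : Fin 4) (j : ZMod n) (m : ℕ) :
    (S2Graph n).edist (t, j) (t, j + m) ≤ m := by
  induction m with
  | zero => simp
  | succ m ih =>
    calc (S2Graph n).edist (t, j) (t, j + (m + 1 : ℕ))
        ≤ (S2Graph n).edist (t, j) (t, j + m) + (S2Graph n).edist (t, j + m) (t, j + m + 1) := by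
          push_cast; rw [← add_assoc]; exact SimpleGraph.edist_triangle
      _ ≤ m + 1 := add_le_add ih (edist_succ_le_one t _)
      _ = (m + 1 : ℕ) := by push_cast; rfl

theorem edist_same_layer_le (t : Fin 4) (j k : ZMod n) :
    (S2Graph n).edist (t, j) (t, k) ≤ (k - j).valMinAbs.natAbs := by
  obtain ⟨m, hm | hm⟩ := Int.eq_nat_or_neg (k - j).valMinAbs
  · have hk : k = j + m := by
      rw [← Int.cast_natCast, ← hm, ZMod.coe_valMinAbs, add_sub_cancel]
    rw [hm, Int.natAbs_natCast, hk]
    exact edist_add_natCast_le t j m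
  · have hj : j = k + m := by
      rw [← Int.cast_natCast, ← neg_neg (m : ℤ), ← hm, Int.cast_neg, ZMod.coe_valMinAbs]
      ring
    rw [hm, Int.natAbs_neg, Int.natAbs_natCast, edist_comm, hj]
    exact edist_add_natCast_le t k m

theorem reachable_same_layer (t : Fin 4) (j k : ZMod n) :
    (S2Graph n).Reachable (t, j) (t, k) :=
  reachable_of_edist_ne_top <|
    ne_top_of_le_ne_top (ENat.natCast_ne_top _) (edist_same_layer_le t j k)

theorem dist_same_layer_le (t : Fin 4) (j k : ZMod n) :
    (S2Graph n).dist (t, j) (t, k) ≤ (k - j).valMinAbs.natAbs :=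
  ENat.toNat_le_of_le_natCast (edist_same_layer_le t j k)

theorem connected : (S2Graph n).Connected := by
  rw [connected_iff_exists_forall_reachable]
  refine ⟨(0, 0), fun ⟨t, j⟩ => (reachable_same_layer 0 0 j).trans ?_⟩
  have h01 : (S2Graph n).Reachable (0, j) (1, j) := Adj.reachable (by simp [S2Graph, fromRel_adj])
  have h12 : (S2Graph n).Reachable (1, j) (2, j) := Adj.reachable (by simp [S2Graph, fromRel_adj])
  have h23 : (S2Graph n).Reachable (2, j) (3, j) := Adj.reachable (by simp [S2Graph, fromRel_adj])
  fin_cases t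
  exacts [.rfl, h01, h01.trans h12, (h01.trans h12).trans h23]

def potential (l : ZMod n) (x : Fin 4 × ZMod n) : ℕ :=
  (x.2 - l).valMinAbs.natAbs + if x.1 = 0 then 0 else 1

theorem potential_le_of_adj (l : ZMod n) {x y : Fin 4 × ZMod n} (h : (S2Graph n).Adj x y) :
    potential l y ≤ potential l x + 1 := by
  have hstep (z : ZMod n) : (z + 1).valMinAbs.natAbs ≤ z.valMinAbs.natAbs + 1 ∧
      z.valMinAbs.natAbs ≤ (z + 1).valMinAbs.natAbs + 1 := by
    constructor
    · simpa using ZMod.natAbs_valMinAbs_add_intCast_le z 1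
    · have := ZMod.natAbs_valMinAbs_add_intCast_le (z + 1) (-1)
      rwa [Int.cast_neg, Int.cast_one, add_neg_cancel_right] at this
  rcases snd_eq_or_succ_of_adj h with h2 | ⟨h2 | h2, h1⟩
  · simp only [potential, h2]
    split_ifs <;> omega
  · have := hstep (x.2 - l)
    simp only [potential, h1, h2, add_sub_right_comm]
    omega
  · have := hstep (y.2 - l)
    simp only [potential, h1, h2, add_sub_right_comm]
    omega

theorem dist_zero_lt_dist_one (i l : ZMod n) :
    (S2Graph n).dist (0, i) (0, l) < (S2Graph n).dist (1, i) (0, l) := by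
  have hl : potential l (0, l) = 0 := by simp [potential]
  have hi : potential l (1, i) = (l - i).valMinAbs.natAbs + 1 := by
    rw [potential, ← neg_sub, ZMod.natAbs_valMinAbs_neg, if_neg one_ne_zero]
  calc (S2Graph n).dist (0, i) (0, l) ≤ (l - i).valMinAbs.natAbs := dist_same_layer_le 0 i l
    _ < potential l (1, i) := by omega
    _ ≤ potential l (0, l) + (S2Graph n).dist (0, l) (1, i) :=
      (connected.preconnected _ _).le_add_dist fun _ _ => potential_le_of_adj l
    _ = (S2Graph n).dist (1, i) (0, l) := by rw [hl, zero_add, SimpleGraph.dist_comm]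

theorem fst_eq_zero_of_dist_le (i : ZMod n) {w : Fin 4 × ZMod n}
    (h : (S2Graph n).dist (0, i) w ≤ (S2Graph n).dist (1, i) w) : w.1 = 0 := by
  refine (connected.preconnected _ w).mem_of_dist_le_dist (A := {x | x.1 = 0})
    (σ := fun x => (1, x.2)) ?_ ?_ rfl h
  · rintro ⟨s, j⟩ (rfl : s = 0) x hx
    exact fst_eq_zero_or_eq_of_adj hx
  · rintro ⟨s, j⟩ (rfl : s = 0) ⟨t, k⟩ (rfl : t = 0) h
    exact adj_same_layer_iff.2 (adj_same_layer_iff.1 h)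

theorem dist_zero_ne_dist_one (i : ZMod n) (w : Fin 4 × ZMod n) :
    (S2Graph n).dist (0, i) w ≠ (S2Graph n).dist (1, i) w := by
  intro h
  obtain ⟨t, l⟩ := w
  obtain rfl : t = 0 := fst_eq_zero_of_dist_le i h.le
  exact (dist_zero_lt_dist_one i l).ne h

def reflection : S2Graph n ≃g S2Graph n where
  toEquiv := Fin.revPerm.prodCongr (Equiv.neg _)
  map_rel_iff' := by
    rintro ⟨s, j⟩ ⟨t, k⟩
    have e (a b : ZMod n) : -a = -b + 1 ↔ b = a + 1 :=
      ⟨fun h => by linear_combination h, fun h => by linear_combination h⟩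
    fin_cases s <;> fin_cases t <;> simp [S2Graph, fromRel_adj, e] <;> grind

end S2Graph

theorem stmt15_general (n : ℕ) (i : ZMod n) (w : Fin 4 × ZMod n) :
    (S2Graph n).dist (0, i) w ≠ (S2Graph n).dist (1, i) w ∧
    (S2Graph n).dist (2, i) w ≠ (S2Graph n).dist (3, i) w := by
  refine ⟨S2Graph.dist_zero_ne_dist_one i w, fun h => ?_⟩
  have := S2Graph.dist_zero_ne_dist_one (-i) (S2Graph.reflection w)
  rw [show ((0 : Fin 4), -i) = S2Graph.reflection (3, i) from rfl,
    show ((1 : Fin 4), -i) = S2Graph.reflection (2, i) from rfl,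
    SimpleGraph.Iso.dist_eq, SimpleGraph.Iso.dist_eq] at this
  exact this h.symm

theorem stmt15 (n : ℕ) (hn : 5 ≤ n) (i : ZMod n) (w : Fin 4 × ZMod n) :
    (S2Graph n).dist (0, i) w ≠ (S2Graph n).dist (1, i) w ∧
    (S2Graph n).dist (2, i) w ≠ (S2Graph n).dist (3, i) w :=
  stmt15_general n i w
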